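/- arXiv:2506.01896 — 6 statements merged into one kernel-verified Lean document; each statement's English description precedes it below -/
import Mathlib

section
/- If r ≥ B/2 with B a positive integer, then lim_{m→∞} (log |W(m, ⌊r·m⌋, B)|) / m = log(B + 1). -/
/-!
The reflection `x ↦ (B - x i)ᵢ` of the box `{0, …, B}^m` sends coordinate sum `s` to `B m - s`.
Once `B m ≤ 2 L + 1` it maps the vectors with sum `> L` injectively into those with sum `≤ L`,
so `W(m, L, B)` contains at least half of the box: `(B + 1)^m ≤ 2 |W| ≤ 2 (B + 1)^m`.
Taking logarithms and dividing by `m` gives the limit.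
-/

open Filter Finset Topology

section Box

variable {m B : ℕ}

def boxFinset (m B : ℕ) : Finset (Fin m → ℕ) :=
  Fintype.piFinset fun _ => range (B + 1)

theorem mem_boxFinset {x : Fin m → ℕ} : x ∈ boxFinset m B ↔ ∀ i, x i ≤ B := by
  simp only [boxFinset, Fintype.mem_piFinset, mem_range, Nat.lt_succ_iff]

theorem card_boxFinset : #(boxFinset m B) = (B + 1) ^ m := by
  simp [boxFinset, Fintype.card_piFinset]

theorem natCard_eq_card_filter_boxFinset (L : ℕ) :
    Nat.card {x : Fin m → ℕ // (∑ i, x i ≤ L) ∧ ∀ i, x i ≤ B} =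
      #((boxFinset m B).filter fun x => ∑ i, x i ≤ L) := by
  rw [← Nat.card_eq_finsetCard]
  exact Nat.card_congr <| Equiv.subtypeEquivRight fun x => by
    rw [mem_filter, mem_boxFinset, and_comm]

theorem sum_tsub_add_sum_of_mem_boxFinset {x : Fin m → ℕ} (hx : x ∈ boxFinset m B) :
    ∑ i, (B - x i) + ∑ i, x i = B * m := by
  rw [← sum_add_distrib, sum_congr rfl fun i _ => Nat.sub_add_cancel (mem_boxFinset.1 hx i)]
  simp [mul_comm]

theorem card_filter_lt_sum_le_card_filter_sum_le {L : ℕ} (hL : B * m ≤ 2 * L + 1) :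
    #((boxFinset m B).filter fun x => L < ∑ i, x i) ≤
      #((boxFinset m B).filter fun x => ∑ i, x i ≤ L) := by
  refine card_le_card_of_injOn (fun x i => B - x i) (fun x hx => ?_) (fun x hx y hy hxy => ?_)
  · rw [mem_coe, mem_filter] at hx
    have hsum := sum_tsub_add_sum_of_mem_boxFinset hx.1
    rw [mem_coe, mem_filter, mem_boxFinset]
    dsimp only
    exact ⟨fun i => Nat.sub_le B (x i), by omega⟩
  · rw [mem_coe, mem_filter, mem_boxFinset] at hx hy
    funext i
    have hxyi : B - x i = B - y i := congrFun hxy i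
    have hxi := hx.1 i
    have hyi := hy.1 i
    omega

theorem pow_le_two_mul_card_filter_sum_le {L : ℕ} (hL : B * m ≤ 2 * L + 1) :
    (B + 1) ^ m ≤ 2 * #((boxFinset m B).filter fun x => ∑ i, x i ≤ L) := by
  have hsplit := card_filter_add_card_filter_not (s := boxFinset m B) fun x => ∑ i, x i ≤ L
  simp only [not_le] at hsplit
  have hreflect := card_filter_lt_sum_le_card_filter_sum_le hL
  rw [card_boxFinset] at hsplit
  omega

end Box

theorem tendsto_log_div_of_le_pow_of_pow_le_mul {a c : ℝ} {u : ℕ → ℝ} (ha : 0 < a) (hc : 0 < c)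
    (hle : ∀ m, u m ≤ a ^ m) (hge : ∀ m, a ^ m ≤ c * u m) :
    Tendsto (fun m : ℕ => Real.log (u m) / m) atTop (𝓝 (Real.log a)) := by
  have hpos : ∀ m, 0 < u m := fun m => pos_of_mul_pos_right ((pow_pos ha m).trans_le (hge m)) hc.le
  have hupper : ∀ m : ℕ, 1 ≤ m → Real.log (u m) / m ≤ Real.log a := fun m hm => by
    rw [div_le_iff₀ (by exact_mod_cast hm), mul_comm, ← Real.log_pow]
    exact Real.log_le_log (hpos m) (hle m)
  have hlower : ∀ m : ℕ, 1 ≤ m → Real.log a - Real.log c / m ≤ Real.log (u m) / m := fun m hm => by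
    have h := Real.log_le_log (pow_pos ha m) (hge m)
    rw [Real.log_pow, Real.log_mul hc.ne' (hpos m).ne'] at h
    rw [sub_le_iff_le_add, ← add_div, le_div_iff₀ (by exact_mod_cast hm)]
    linarith
  refine tendsto_of_tendsto_of_tendsto_of_le_of_le' ?_ tendsto_const_nhds
    (eventually_atTop.2 ⟨1, hlower⟩) (eventually_atTop.2 ⟨1, hupper⟩)
  simpa using tendsto_const_nhds.sub (tendsto_const_div_atTop_nhds_zero_nat (Real.log c))

theorem mul_le_two_mul_floor_add_one {B m : ℕ} {r : ℝ} (hr : (B : ℝ) / 2 ≤ r) :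
    B * m ≤ 2 * ⌊r * m⌋₊ + 1 := by
  have hfloor := Nat.lt_floor_add_one (r * m)
  have hrm : (B : ℝ) * m ≤ 2 * (r * m) := by
    nlinarith [(Nat.cast_nonneg m : (0 : ℝ) ≤ m)]
  have : ((B * m : ℕ) : ℝ) < ((2 * ⌊r * m⌋₊ + 2 : ℕ) : ℝ) := by push_cast; linarith
  exact Nat.lt_add_one_iff.1 (by exact_mod_cast this)

theorem stmt_4_general (B : ℕ) (r : ℝ) (hr : (B : ℝ) / 2 ≤ r) :
    Tendsto (fun m : ℕ =>
        Real.log (Nat.card {x : Fin m → ℕ //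
          (∑ i, x i ≤ ⌊r * m⌋₊) ∧ ∀ i, x i ≤ B}) / m)
      atTop (nhds (Real.log (B + 1))) := by
  refine tendsto_log_div_of_le_pow_of_pow_le_mul (c := 2) (by positivity) two_pos
    (fun m => ?_) (fun m => ?_) <;> rw [natCard_eq_card_filter_boxFinset]
  · exact_mod_cast card_boxFinset (B := B) ▸ card_le_card (filter_subset _ _)
  · exact_mod_cast pow_le_two_mul_card_filter_sum_le (mul_le_two_mul_floor_add_one hr)

theorem stmt_4 (B : ℕ) (hB : 0 < B) (r : ℝ) (hr : (B : ℝ) / 2 ≤ r) :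
    Tendsto (fun m : ℕ =>
        Real.log (Nat.card {x : Fin m → ℕ //
          (∑ i, x i ≤ ⌊r * m⌋₊) ∧ ∀ i, x i ≤ B}) / m)
      atTop (nhds (Real.log (B + 1))) :=
  stmt_4_general B r hr
end

section
/- The rate function c ↦ I(c, B) is upper semicontinuous at every c_0 > 0: limsup_{c → c_0} I(c, B) ≤ I(c_0, B). -/
open Filter

noncomputable def rateI (B : ℕ) (c : ℝ) : ℝ :=
  if (B : ℝ) / 2 ≤ c then 0
  else ⨆ t : ℝ, (t * c - Real.log ((∑ j ∈ Finset.range (B + 1), Real.exp (j * t)) / (B + 1)))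

namespace RateIAux

/-- abbreviation for the mgf-type sum -/
noncomputable def S (B : ℕ) (t : ℝ) : ℝ := ∑ j ∈ Finset.range (B + 1), Real.exp (j * t)

lemma S_pos (B : ℕ) (t : ℝ) : 0 < S B t := by
  apply Finset.sum_pos (fun j _ => Real.exp_pos _)
  exact ⟨0, Finset.mem_range.2 (Nat.succ_pos B)⟩

lemma ratio_pos (B : ℕ) (t : ℝ) : 0 < S B t / (B + 1 : ℝ) :=
  div_pos (S_pos B t) (by positivity)

/-- lower bound on Λ from a single term of the sum -/
lemma log_ratio_ge (B : ℕ) (j : ℕ) (hj : j ≤ B) (t : ℝ) :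
    (j : ℝ) * t - Real.log (B + 1) ≤ Real.log (S B t / (B + 1 : ℝ)) := by
  have h1 : Real.exp ((j : ℝ) * t) ≤ S B t :=
    Finset.single_le_sum (f := fun i : ℕ => Real.exp ((i : ℝ) * t))
      (fun i _ => (Real.exp_pos _).le) (Finset.mem_range.2 (Nat.lt_succ_of_le hj))
  have h2 : (j : ℝ) * t ≤ Real.log (S B t) :=
    (Real.le_log_iff_exp_le (S_pos B t)).2 h1
  have h3 : Real.log (S B t / (B + 1 : ℝ)) = Real.log (S B t) - Real.log (B + 1) := by
    rw [Real.log_div (S_pos B t).ne' (by positivity)]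
  linarith

lemma two_exp_avg_le (x y : ℝ) : 2 * Real.exp ((x + y) / 2) ≤ Real.exp x + Real.exp y := by
  have h1 : Real.exp (x / 2) * Real.exp (y / 2) = Real.exp ((x + y) / 2) := by
    rw [← Real.exp_add]; ring_nf
  have h2 : Real.exp (x / 2) * Real.exp (x / 2) = Real.exp x := by
    rw [← Real.exp_add]; ring_nf
  have h3 : Real.exp (y / 2) * Real.exp (y / 2) = Real.exp y := by
    rw [← Real.exp_add]; ring_nf
  nlinarith [sq_nonneg (Real.exp (x / 2) - Real.exp (y / 2))]

/-- Jensen-type bound: Λ(t) ≥ (B/2)·t -/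
lemma jensen (B : ℕ) (t : ℝ) : (B : ℝ) / 2 * t ≤ Real.log (S B t / (B + 1 : ℝ)) := by
  rw [Real.le_log_iff_exp_le (ratio_pos B t), le_div_iff₀ (by positivity : (0:ℝ) < (B:ℝ) + 1)]
  have hrefl : ∑ j ∈ Finset.range (B + 1), Real.exp (((B + 1 - 1 - j : ℕ) : ℝ) * t) = S B t :=
    Finset.sum_range_reflect (fun j : ℕ => Real.exp ((j : ℝ) * t)) (B + 1)
  have hpair : ∀ j ∈ Finset.range (B + 1),
      2 * Real.exp ((B : ℝ) / 2 * t) ≤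
        Real.exp ((j : ℝ) * t) + Real.exp (((B + 1 - 1 - j : ℕ) : ℝ) * t) := by
    intro j hj
    have hjB : j ≤ B := Nat.lt_succ_iff.1 (Finset.mem_range.1 hj)
    have hcast : ((B + 1 - 1 - j : ℕ) : ℝ) = (B : ℝ) - j := by
      simp only [Nat.add_sub_cancel]
      rw [Nat.cast_sub hjB]
    rw [hcast]
    have := two_exp_avg_le ((j : ℝ) * t) (((B : ℝ) - j) * t)
    have heq : ((j : ℝ) * t + ((B : ℝ) - j) * t) / 2 = (B : ℝ) / 2 * t := by ring
    rw [heq] at this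
    exact this
  have hsum := Finset.sum_le_sum hpair
  rw [Finset.sum_add_distrib, hrefl, Finset.sum_const, Finset.card_range] at hsum
  have hS : (∑ x ∈ Finset.range (B + 1), Real.exp ((x : ℝ) * t)) = S B t := rfl
  rw [hS, nsmul_eq_mul] at hsum
  push_cast at hsum
  nlinarith [Real.exp_pos ((B : ℝ) / 2 * t)]

lemma bddAbove_family (B : ℕ) (c : ℝ) (h0 : 0 ≤ c) (hcB : c ≤ B) :
    BddAbove (Set.range fun t : ℝ => t * c - Real.log (S B t / (B + 1 : ℝ))) := by
  refine ⟨Real.log (B + 1), ?_⟩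
  rintro x ⟨t, rfl⟩
  rcases le_or_gt 0 t with ht | ht
  · have := log_ratio_ge B B le_rfl t
    nlinarith
  · have := log_ratio_ge B 0 (Nat.zero_le B) t
    push_cast at this
    nlinarith

lemma log_ratio_zero (B : ℕ) : Real.log (S B 0 / (B + 1 : ℝ)) = 0 := by
  have : S B 0 = (B + 1 : ℝ) := by
    simp [S, Finset.sum_const, Finset.card_range]
  rw [this, div_self (by positivity : (B + 1 : ℝ) ≠ 0), Real.log_one]

lemma rateI_nonneg (B : ℕ) (c : ℝ) (h0 : 0 ≤ c) (hcB : c ≤ B) : 0 ≤ rateI B c := by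
  unfold rateI
  split_ifs with h
  · exact le_refl 0
  · have h0' : (0 : ℝ) = 0 * c - Real.log (S B 0 / (B + 1 : ℝ)) := by
      rw [log_ratio_zero]; ring
    calc (0 : ℝ) = 0 * c - Real.log (S B 0 / (B + 1 : ℝ)) := h0'
      _ ≤ _ := le_ciSup (bddAbove_family B c h0 hcB) 0

lemma key_bound (B : ℕ) (hB : 0 < B) (c₀ : ℝ) (h1 : 0 < c₀) (h2 : c₀ ≤ (B : ℝ) / 2) (t : ℝ) :
    t * c₀ - Real.log (S B t / (B + 1 : ℝ)) ≤ rateI B c₀ := by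
  rcases eq_or_lt_of_le h2 with heq | hlt
  · have h0 : rateI B c₀ = 0 := by unfold rateI; rw [if_pos heq.ge]
    rw [h0]
    have := jensen B t
    rw [← heq] at *
    nlinarith
  · have h0 : rateI B c₀ =
        ⨆ t : ℝ, (t * c₀ - Real.log ((∑ j ∈ Finset.range (B + 1), Real.exp (j * t)) / (B + 1))) := by
      unfold rateI; rw [if_neg (not_le.2 hlt)]
    rw [h0]
    have hb : c₀ ≤ (B : ℝ) := by
      have : (0 : ℝ) ≤ B := Nat.cast_nonneg B
      linarith
    exact le_ciSup (bddAbove_family B c₀ h1.le hb) t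

end RateIAux

theorem stmt_7 (B : ℕ) (hB : 0 < B) (c₀ : ℝ) (hc₀ : 0 < c₀) :
    Filter.limsup (fun c => rateI B c) (nhds c₀) ≤ rateI B c₀ := by
  open RateIAux in
  have hB1 : (1 : ℝ) ≤ B := by exact_mod_cast hB
  rcases le_or_gt c₀ ((B : ℝ) / 2) with h | h
  swap
  · -- c₀ > B/2 : eventually rateI = 0
    have hev : ∀ᶠ c in nhds c₀, rateI B c = 0 := by
      filter_upwards [eventually_gt_nhds h] with c hc
      unfold rateI; rw [if_pos hc.le]
    rw [Filter.limsup_congr hev, Filter.limsup_const]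
    unfold rateI; rw [if_pos h.le]
  · -- c₀ ≤ B/2
    have hc0B : c₀ < (B : ℝ) := by nlinarith
    set L : ℝ := Real.log (B + 1) with hL
    have hLpos : 0 < L := Real.log_pos (by linarith)
    set δ : ℝ := min c₀ ((B : ℝ) - c₀) / 2 with hδ
    have hδpos : 0 < δ := by
      have : 0 < min c₀ ((B : ℝ) - c₀) := lt_min hc₀ (by linarith)
      positivity
    have hδc : 2 * δ ≤ c₀ := by
      have := min_le_left c₀ ((B : ℝ) - c₀); rw [hδ]; linarith
    have hδB : 2 * δ ≤ (B : ℝ) - c₀ := by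
      have := min_le_right c₀ ((B : ℝ) - c₀); rw [hδ]; linarith
    set T : ℝ := L / δ with hT
    have hTpos : 0 < T := div_pos hLpos hδpos
    have hTδ : T * δ = L := div_mul_cancel₀ L hδpos.ne'
    have hnn : 0 ≤ rateI B c₀ := RateIAux.rateI_nonneg B c₀ hc₀.le hc0B.le
    have hcob : Filter.IsCoboundedUnder (· ≤ ·) (nhds c₀) (fun c => rateI B c) := by
      apply Filter.IsBoundedUnder.isCoboundedUnder_le
      refine ⟨0, Filter.eventually_map.2 ?_⟩
      filter_upwards [eventually_abs_sub_lt c₀ hδpos] with c hc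
      have h0c : 0 < c := by
        have := abs_lt.1 hc; linarith
      have hcB : c ≤ (B : ℝ) := by
        have := abs_lt.1 hc; nlinarith
      exact RateIAux.rateI_nonneg B c h0c.le hcB
    refine le_of_forall_pos_le_add fun ε hε => ?_
    apply Filter.limsup_le_of_le hcob
    have hεT : 0 < min δ (ε / T) := lt_min hδpos (div_pos hε hTpos)
    filter_upwards [eventually_abs_sub_lt c₀ hεT] with c hc
    have hcδ : |c - c₀| < δ := lt_of_lt_of_le hc (min_le_left _ _)
    have hcε : |c - c₀| < ε / T := lt_of_lt_of_le hc (min_le_right _ _)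
    have habs := abs_lt.1 hcδ
    by_cases hchalf : (B : ℝ) / 2 ≤ c
    · have : rateI B c = 0 := by unfold rateI; rw [if_pos hchalf]
      rw [this]; linarith
    · have hrc : rateI B c =
          ⨆ t : ℝ, (t * c - Real.log ((∑ j ∈ Finset.range (B + 1), Real.exp (j * t)) / (B + 1))) := by
        unfold rateI; rw [if_neg hchalf]
      rw [hrc]
      apply ciSup_le
      intro t
      show t * c - Real.log (RateIAux.S B t / (B + 1 : ℝ)) ≤ rateI B c₀ + ε
      rcases le_or_gt (|t|) T with htT | htT
      · have hkey := RateIAux.key_bound B hB c₀ hc₀ h t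
        have : t * (c - c₀) ≤ T * (ε / T) := by
          calc t * (c - c₀) ≤ |t * (c - c₀)| := le_abs_self _
            _ = |t| * |c - c₀| := abs_mul t (c - c₀)
            _ ≤ T * (ε / T) := by
                apply mul_le_mul htT hcε.le (abs_nonneg _) hTpos.le
        have hTε : T * (ε / T) = ε := mul_div_cancel₀ ε hTpos.ne'
        have hid : t * c - Real.log (RateIAux.S B t / (B + 1 : ℝ)) =
            (t * c₀ - Real.log (RateIAux.S B t / (B + 1 : ℝ))) + t * (c - c₀) := by ring
        linarith
      · rcases le_or_gt 0 t with ht0 | ht0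
        · -- t > T ≥ 0, use j = B term
          have htT' : T < t := by rwa [abs_of_nonneg ht0] at htT
          have := RateIAux.log_ratio_ge B B le_rfl t
          have hcB' : c - (B : ℝ) ≤ -δ := by linarith
          have h1 : t * c - Real.log (RateIAux.S B t / (B + 1 : ℝ)) ≤ t * (c - (B : ℝ)) + L := by
            have hid : t * (c - (B : ℝ)) + L = t * c - ((B : ℝ) * t - L) := by ring
            rw [hid, hL]; linarith
          have h2 : t * (c - (B : ℝ)) ≤ T * (c - (B : ℝ)) := by
            have := mul_le_mul_of_nonpos_right htT'.le (by linarith : c - (B : ℝ) ≤ 0)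
            linarith
          have h3 : T * (c - (B : ℝ)) ≤ T * (-δ) :=
            mul_le_mul_of_nonneg_left hcB' hTpos.le
          have h4 : T * (-δ) = -L := by rw [← hTδ]; ring
          linarith
        · -- t < -T, use j = 0 term
          have htT' : t < -T := by
            rw [abs_of_neg ht0] at htT; linarith
          have := RateIAux.log_ratio_ge B 0 (Nat.zero_le B) t
          push_cast at this
          have hcpos : δ ≤ c := by linarith
          have h1 : t * c - Real.log (RateIAux.S B t / (B + 1 : ℝ)) ≤ t * c + L := by
            rw [hL]; linarith
          have h2 : t * c ≤ -T * c := by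
            have := mul_le_mul_of_nonneg_right htT'.le (by linarith : (0:ℝ) ≤ c)
            linarith
          have h3 : -T * c ≤ -T * δ := by
            have := mul_le_mul_of_nonneg_left hcpos hTpos.le
            linarith
          have h4 : -T * δ = -L := by rw [← hTδ]; ring
          linarith
end

section
/- For any real r < B/2 with B a positive integer, lim_{m→∞} (log |W(m, ⌊r·m⌋, B)|)/m = log(B+1) − I(r, B), where I(r, B) = sup_t (t·r − log((Σ_{j=0}^{B} e^{jt})/(B+1))). -/
/-!
Counting tuples in `{0, …, B}ᵐ` is computing probabilities for `m` independent uniform variables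
on `{0, …, B}`, whose moment generating function is `expSum B t / (B + 1)`.

Upper bound (Chernoff): for `t ≤ 0` every admissible tuple has `1 ≤ exp (t (∑ xᵢ - r m))`, and the
sum of `exp (t ∑ xᵢ)` over all tuples is `expSum B t ^ m`. For `t ≥ 0` the trivial bound
`(B + 1) ^ m` suffices, because Jensen gives `(B + 1) exp (B t / 2) ≤ expSum B t` and `r ≤ B / 2`.

Lower bound: tilt the uniform law by `exp (j t)`, with `t ≤ 0` chosen by the intermediate value
theorem so that the tilted mean is slightly below `r`. By Chebyshev, more than half of the tilted
mass sits on admissible tuples whose sum is at least `m (mean - ε)`, and each of them has tilted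
mass at most `exp (t m (mean - ε)) / expSum B t ^ m`. For `r = 0` the lower bound is trivial, as
`log (expSum B t) → 0` when `t → -∞`.
-/

open Filter Finset Real Topology

section ProductWeight

variable {ι α : Type*} [Fintype ι] [DecidableEq ι] [Fintype α] {w : α → ℝ}

theorem sum_prod_mul_apply_mul_apply (Y : α → ℝ) (i k : ι) :
    ∑ x : ι → α, (∏ l, w (x l)) * (Y (x i) * Y (x k)) =
      ∏ l, ∑ a, w a * ((if l = i then Y a else 1) * (if l = k then Y a else 1)) := by
  rw [Fintype.prod_sum]
  refine sum_congr rfl fun x _ => ?_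
  rw [prod_mul_distrib, prod_mul_distrib, prod_ite_eq' univ i, prod_ite_eq' univ k]
  simp

theorem sum_prod_mul_sq_sum (hw : ∑ a, w a = 1) {Y : α → ℝ} (hY : ∑ a, w a * Y a = 0) :
    ∑ x : ι → α, (∏ i, w (x i)) * (∑ i, Y (x i)) ^ 2 =
      Fintype.card ι * ∑ a, w a * Y a ^ 2 := by
  have pair (i k : ι) : ∑ x : ι → α, (∏ l, w (x l)) * (Y (x i) * Y (x k)) =
      if i = k then ∑ a, w a * Y a ^ 2 else 0 := by
    rw [sum_prod_mul_apply_mul_apply]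
    split_ifs with h
    · subst h
      rw [prod_eq_single i (fun l _ hl => by simp [hl, hw]) (by simp)]
      simp [sq]
    · exact prod_eq_zero (mem_univ i) (by simp [h, hY])
  calc ∑ x : ι → α, (∏ i, w (x i)) * (∑ i, Y (x i)) ^ 2
      = ∑ i, ∑ k, ∑ x : ι → α, (∏ l, w (x l)) * (Y (x i) * Y (x k)) := by
        simp_rw [sq, sum_mul_sum, mul_sum]
        rw [sum_comm]
        exact sum_congr rfl fun i _ => sum_comm
    _ = Fintype.card ι * ∑ a, w a * Y a ^ 2 := by simp [pair]

theorem sum_prod_filter_le_abs_le_div_sq (hw0 : ∀ a, 0 ≤ w a) (hw : ∑ a, w a = 1) {Y : α → ℝ}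
    (hY : ∑ a, w a * Y a = 0) {δ : ℝ} (hδ : 0 < δ) :
    ∑ x : ι → α with δ ≤ |∑ i, Y (x i)|, ∏ i, w (x i) ≤
      Fintype.card ι * (∑ a, w a * Y a ^ 2) / δ ^ 2 := by
  have hW (x : ι → α) : 0 ≤ ∏ i, w (x i) := prod_nonneg fun i _ => hw0 _
  rw [← sum_prod_mul_sq_sum hw hY, sum_div]
  calc ∑ x : ι → α with δ ≤ |∑ i, Y (x i)|, ∏ i, w (x i)
      ≤ ∑ x : ι → α with δ ≤ |∑ i, Y (x i)|, (∏ i, w (x i)) * (∑ i, Y (x i)) ^ 2 / δ ^ 2 := by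
        refine sum_le_sum fun x hx => ?_
        have : δ ^ 2 ≤ (∑ i, Y (x i)) ^ 2 := by
          rw [← sq_abs (∑ i, Y (x i))]
          exact pow_le_pow_left₀ hδ.le (mem_filter.1 hx).2 2
        rw [le_div_iff₀ (by positivity)]
        exact mul_le_mul_of_nonneg_left this (hW x)
    _ ≤ ∑ x : ι → α, (∏ i, w (x i)) * (∑ i, Y (x i)) ^ 2 / δ ^ 2 :=
        sum_le_sum_of_subset_of_nonneg (filter_subset _ _) fun x _ _ => by
          have := hW x
          positivity

end ProductWeight

section ExpSum

variable (B : ℕ)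

noncomputable def expSum (t : ℝ) : ℝ := ∑ j ∈ range (B + 1), exp (j * t)

theorem two_mul_sum_range_natCast (n : ℕ) : 2 * ∑ j ∈ range (n + 1), (j : ℝ) = n * (n + 1) := by
  induction n with
  | zero => simp
  | succ n ih => rw [sum_range_succ, mul_add, ih]; push_cast; ring

theorem one_le_expSum (t : ℝ) : 1 ≤ expSum B t := by
  simpa [expSum] using single_le_sum (f := fun j : ℕ => exp (j * t)) (fun j _ => (exp_pos _).le)
    (mem_range.2 B.succ_pos)

theorem expSum_pos (t : ℝ) : 0 < expSum B t := one_pos.trans_le (one_le_expSum B t)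

theorem sum_fin_exp_eq_expSum (t : ℝ) : ∑ j : Fin (B + 1), exp ((j : ℕ) * t) = expSum B t :=
  Fin.sum_univ_eq_sum_range (fun j => exp (j * t)) (B + 1)

theorem sum_exp_mul_sum_eq_expSum_pow (m : ℕ) (t : ℝ) :
    ∑ x : Fin m → Fin (B + 1), exp (t * ∑ i, ((x i : ℕ) : ℝ)) = expSum B t ^ m := by
  rw [← sum_fin_exp_eq_expSum, ← Fin.prod_const, Fintype.prod_sum]
  simp_rw [mul_sum, exp_sum, mul_comm t]

theorem add_one_mul_exp_le_expSum (t : ℝ) : (B + 1) * exp (B * t / 2) ≤ expSum B t := by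
  have hB : (0 : ℝ) < B + 1 := by positivity
  have jensen := convexOn_exp.map_sum_le (t := range (B + 1)) (w := fun _ => ((B : ℝ) + 1)⁻¹)
    (p := fun j => j * t) (fun _ _ => by positivity) (by simp [hB.ne']) (by simp)
  have hmean : ∑ j ∈ range (B + 1), ((B : ℝ) + 1)⁻¹ • ((j : ℝ) * t) = B * t / 2 := by
    simp_rw [smul_eq_mul, ← mul_assoc, ← sum_mul, ← mul_sum]
    have := two_mul_sum_range_natCast B
    field_simp
    linear_combination t * this
  rw [hmean, ← smul_sum, smul_eq_mul, inv_mul_eq_div, le_div_iff₀' hB] at jensen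
  exact jensen

theorem log_add_one_add_le_log_expSum (t : ℝ) : log (B + 1) + B * t / 2 ≤ log (expSum B t) := by
  rw [← log_exp (B * t / 2), ← log_mul (by positivity) (exp_pos _).ne']
  exact log_le_log (by positivity) (add_one_mul_exp_le_expSum B t)

theorem tendsto_expSum_atBot : Tendsto (expSum B) atBot (𝓝 1) := by
  have h (j : ℕ) : Tendsto (fun t : ℝ => exp ((j + 1 : ℕ) * t)) atBot (𝓝 0) :=
    tendsto_exp_atBot.comp (tendsto_id.const_mul_atBot (by positivity))
  have := (tendsto_finsetSum (range B) fun j _ => h j).add_const 1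
  simp only [sum_const_zero, zero_add] at this
  convert this using 2 with t
  simp [expSum, sum_range_succ']

end ExpSum

section Counting

variable (B : ℕ)

def boundedTuples (m L : ℕ) : Finset (Fin m → Fin (B + 1)) := {x | ∑ i, (x i : ℕ) ≤ L}

theorem natCard_eq_card_boundedTuples (m L : ℕ) :
    Nat.card {x : Fin m → ℕ // (∑ i, x i ≤ L) ∧ ∀ i, x i ≤ B} = #(boundedTuples B m L) := by
  let e : {x : Fin m → ℕ // (∑ i, x i ≤ L) ∧ ∀ i, x i ≤ B} ≃
      {y : Fin m → Fin (B + 1) // ∑ i, (y i : ℕ) ≤ L} :=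
    { toFun x := ⟨fun i => ⟨x.1 i, Nat.lt_succ_of_le (x.2.2 i)⟩, x.2.1⟩
      invFun y := ⟨fun i => y.1 i, y.2, fun i => Nat.le_of_lt_succ (y.1 i).2⟩
      left_inv _ := rfl
      right_inv _ := rfl }
  rw [Nat.card_congr e, Nat.card_eq_fintype_card, Fintype.card_subtype, boundedTuples]

theorem card_boundedTuples_pos (m L : ℕ) : 0 < #(boundedTuples B m L) :=
  card_pos.2 ⟨0, by simp [boundedTuples]⟩

theorem card_boundedTuples_le {r : ℝ} (hr : r ≤ B / 2) {m L : ℕ} (hL : L ≤ r * m) (t : ℝ) :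
    (#(boundedTuples B m L) : ℝ) ≤ expSum B t ^ m * exp (-(t * r * m)) := by
  rcases le_total t 0 with ht | ht
  · calc (#(boundedTuples B m L) : ℝ)
        ≤ ∑ x ∈ boundedTuples B m L, exp (t * ∑ i, ((x i : ℕ) : ℝ)) * exp (-(t * r * m)) := by
          rw [card_eq_sum_ones, Nat.cast_sum, Nat.cast_one]
          refine sum_le_sum fun x hx => ?_
          rw [← exp_add, one_le_exp_iff]
          have : ∑ i, ((x i : ℕ) : ℝ) ≤ r * m := by
            exact_mod_cast (Nat.cast_le.2 (mem_filter.1 hx).2).trans hL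
          nlinarith
      _ ≤ ∑ x : Fin m → Fin (B + 1), exp (t * ∑ i, ((x i : ℕ) : ℝ)) * exp (-(t * r * m)) :=
          sum_le_sum_of_subset_of_nonneg (subset_univ _) fun _ _ _ => by positivity
      _ = expSum B t ^ m * exp (-(t * r * m)) := by
          rw [← sum_mul, sum_exp_mul_sum_eq_expSum_pow]
  · have hbase : (B + 1 : ℝ) ≤ expSum B t * exp (-(B * t / 2)) := by
      calc (B + 1 : ℝ) = (B + 1) * exp (B * t / 2) * exp (-(B * t / 2)) := by
            rw [mul_assoc, ← exp_add, add_neg_cancel, exp_zero, mul_one]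
        _ ≤ expSum B t * exp (-(B * t / 2)) := by gcongr; exact add_one_mul_exp_le_expSum B t
    calc (#(boundedTuples B m L) : ℝ) ≤ (B + 1) ^ m := by
          exact_mod_cast (card_le_univ _).trans_eq (by simp)
      _ ≤ (expSum B t * exp (-(B * t / 2))) ^ m := pow_le_pow_left₀ (by positivity) hbase m
      _ ≤ expSum B t ^ m * exp (-(t * r * m)) := by
          rw [mul_pow, ← exp_nat_mul]
          refine mul_le_mul_of_nonneg_left (exp_le_exp.2 ?_) (pow_pos (expSum_pos B t) m).le
          nlinarith [mul_nonneg (mul_nonneg ht (sub_nonneg.2 hr)) (Nat.cast_nonneg (α := ℝ) m)]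

theorem log_card_boundedTuples_div_le {r : ℝ} (hr : r ≤ B / 2) {m L : ℕ} (hm : 0 < m)
    (hL : L ≤ r * m) (t : ℝ) : log #(boundedTuples B m L) / m ≤ log (expSum B t) - t * r := by
  have hm' : (0 : ℝ) < m := Nat.cast_pos.2 hm
  rw [div_le_iff₀ hm']
  calc log #(boundedTuples B m L) ≤ log (expSum B t ^ m * exp (-(t * r * m))) :=
        log_le_log (Nat.cast_pos.2 (card_boundedTuples_pos B m L))
          (card_boundedTuples_le B hr hL t)
    _ = (log (expSum B t) - t * r) * m := by
        rw [log_mul (pow_pos (expSum_pos B t) m).ne' (exp_pos _).ne', log_pow, log_exp]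
        ring

end Counting

section Tilt

variable (B : ℕ)

noncomputable def tilt (t : ℝ) (j : Fin (B + 1)) : ℝ := exp ((j : ℕ) * t) / expSum B t

noncomputable def tiltMean (t : ℝ) : ℝ := ∑ j, tilt B t j * (j : ℕ)

theorem tilt_nonneg (t : ℝ) (j : Fin (B + 1)) : 0 ≤ tilt B t j :=
  div_nonneg (exp_pos _).le (expSum_pos B t).le

theorem sum_tilt (t : ℝ) : ∑ j, tilt B t j = 1 := by
  simp only [tilt]
  rw [← sum_div, sum_fin_exp_eq_expSum, div_self (expSum_pos B t).ne']

theorem prod_tilt {m : ℕ} (t : ℝ) (x : Fin m → Fin (B + 1)) :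
    ∏ i, tilt B t (x i) = exp (t * ∑ i, ((x i : ℕ) : ℝ)) / expSum B t ^ m := by
  simp_rw [tilt, prod_div_distrib, prod_const, card_univ, Fintype.card_fin, mul_sum, exp_sum,
    mul_comm t]

theorem tiltMean_nonneg (t : ℝ) : 0 ≤ tiltMean B t :=
  sum_nonneg fun j _ => mul_nonneg (tilt_nonneg B t j) (Nat.cast_nonneg _)

theorem tiltMean_le (t : ℝ) : tiltMean B t ≤ B :=
  calc tiltMean B t ≤ ∑ j, tilt B t j * B :=
        sum_le_sum fun j _ => mul_le_mul_of_nonneg_left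
          (Nat.cast_le.2 (Nat.le_of_lt_succ j.2)) (tilt_nonneg B t j)
    _ = B := by rw [← sum_mul, sum_tilt, one_mul]

theorem tiltMean_zero : tiltMean B 0 = B / 2 := by
  have hB : (B : ℝ) + 1 ≠ 0 := by positivity
  have hS : expSum B 0 = B + 1 := by simp [expSum]
  have := two_mul_sum_range_natCast B
  rw [← Fin.sum_univ_eq_sum_range (fun j => (j : ℝ))] at this
  simp only [tiltMean, tilt, hS, mul_zero, exp_zero, one_div_mul_eq_div, ← sum_div]
  field_simp
  linarith

theorem tiltMean_le_sq_mul_exp {t : ℝ} (ht : t ≤ 0) : tiltMean B t ≤ B ^ 2 * exp t := by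
  rw [tiltMean, Fin.sum_univ_succ]
  simp only [Fin.val_zero, Nat.cast_zero, mul_zero, zero_add, Fin.val_succ]
  calc ∑ j : Fin B, tilt B t j.succ * ((j + 1 : ℕ) : ℝ) ≤ ∑ _j : Fin B, exp t * B := by
        refine sum_le_sum fun j _ => mul_le_mul ?_ ?_ (Nat.cast_nonneg _) (exp_pos t).le
        · calc tilt B t j.succ ≤ exp (((j + 1 : ℕ) : ℝ) * t) :=
                div_le_self (exp_pos _).le (one_le_expSum B t)
            _ ≤ exp t := exp_le_exp.2 (by
                  have : (1 : ℝ) ≤ ((j + 1 : ℕ) : ℝ) := by exact_mod_cast Nat.le_add_left 1 j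
                  nlinarith)
        · exact_mod_cast j.2
    _ = B ^ 2 * exp t := by simp; ring

theorem continuous_tiltMean : Continuous (tiltMean B) := by
  unfold tiltMean tilt
  refine continuous_finsetSum _ fun j _ => (Continuous.div ?_ ?_ fun t => (expSum_pos B t).ne').mul
    continuous_const
  · fun_prop
  · unfold expSum; fun_prop

theorem exists_tiltMean_eq {s : ℝ} (hs0 : 0 < s) (hs : s ≤ B / 2) :
    ∃ t ∈ Set.Icc (log (s / B ^ 2)) 0, tiltMean B t = s := by
  have hB : (1 : ℝ) ≤ B := by
    exact_mod_cast Nat.one_le_iff_ne_zero.2 (by rintro rfl; simp at hs; linarith)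
  have hsB : s / B ^ 2 ≤ 1 := (div_le_one (by positivity)).2 (by nlinarith)
  have hT : log (s / B ^ 2) ≤ 0 := log_nonpos (by positivity) hsB
  refine intermediate_value_Icc hT (continuous_tiltMean B).continuousOn ⟨?_, ?_⟩
  · calc tiltMean B (log (s / B ^ 2)) ≤ B ^ 2 * exp (log (s / B ^ 2)) := tiltMean_le_sq_mul_exp B hT
      _ = s := by rw [exp_log (by positivity)]; field_simp
  · rwa [tiltMean_zero]

end Tilt

section LowerBound

variable (B : ℕ)

theorem one_half_lt_sum_prod_tilt (t : ℝ) {ε : ℝ} (hε : 0 < ε) {m : ℕ}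
    (hm : 2 * B ^ 2 < ε ^ 2 * m) :
    1 / 2 < ∑ x : Fin m → Fin (B + 1) with |∑ i, ((x i : ℕ) : ℝ) - m * tiltMean B t| < ε * m,
      ∏ i, tilt B t (x i) := by
  set μ := tiltMean B t
  let Y : Fin (B + 1) → ℝ := fun j => (j : ℕ) - μ
  have hY : ∑ j, tilt B t j * Y j = 0 := by
    simp only [Y, mul_sub, sum_sub_distrib, ← sum_mul, sum_tilt, one_mul, μ, tiltMean, sub_self]
  have hY2 : ∑ j, tilt B t j * Y j ^ 2 ≤ B ^ 2 :=
    calc ∑ j, tilt B t j * Y j ^ 2 ≤ ∑ j, tilt B t j * B ^ 2 := by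
          refine sum_le_sum fun j _ => mul_le_mul_of_nonneg_left ?_ (tilt_nonneg B t j)
          rw [← sq_abs]
          exact pow_le_pow_left₀ (abs_nonneg _) (abs_sub_le_of_nonneg_of_le (Nat.cast_nonneg _)
            (Nat.cast_le.2 (Nat.le_of_lt_succ j.2)) (tiltMean_nonneg B t) (tiltMean_le B t)) 2
      _ = B ^ 2 := by rw [← sum_mul, sum_tilt, one_mul]
  have hm0 : (0 : ℝ) < m :=
    pos_of_mul_pos_right ((by positivity : (0 : ℝ) ≤ 2 * B ^ 2).trans_lt hm) (sq_nonneg ε)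
  have hsumY (x : Fin m → Fin (B + 1)) : ∑ i, Y (x i) = ∑ i, ((x i : ℕ) : ℝ) - m * μ := by
    simp [Y, sum_sub_distrib]
  have hbad :
      ∑ x : Fin m → Fin (B + 1) with ε * m ≤ |∑ i, Y (x i)|, ∏ i, tilt B t (x i) < 1 / 2 := by
    refine (sum_prod_filter_le_abs_le_div_sq (tilt_nonneg B t) (sum_tilt B t) hY
      (by positivity)).trans_lt ?_
    rw [Fintype.card_fin, div_lt_iff₀ (by positivity)]
    nlinarith
  have htotal : ∑ x : Fin m → Fin (B + 1), ∏ i, tilt B t (x i) = 1 := by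
    simp [← Fintype.prod_sum, sum_tilt]
  have := sum_filter_add_sum_filter_not univ
    (fun x : Fin m → Fin (B + 1) => ε * m ≤ |∑ i, Y (x i)|) fun x => ∏ i, tilt B t (x i)
  simp only [hsumY, not_le] at this hbad
  linarith

theorem expSum_pow_mul_exp_lt_two_mul_card {t : ℝ} (ht : t ≤ 0) {ε : ℝ} (hε : 0 < ε) {m L : ℕ}
    (hL : m * (tiltMean B t + ε) ≤ L) (hm : 2 * B ^ 2 < ε ^ 2 * m) :
    expSum B t ^ m * exp (-(t * m * (tiltMean B t - ε))) < 2 * #(boundedTuples B m L) := by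
  set μ := tiltMean B t
  set typical : Finset (Fin m → Fin (B + 1)) := {x | |∑ i, ((x i : ℕ) : ℝ) - m * μ| < ε * m}
  have hbounds {x} (hx : x ∈ typical) :
      m * (μ - ε) < ∑ i, ((x i : ℕ) : ℝ) ∧ ∑ i, ((x i : ℕ) : ℝ) < m * (μ + ε) := by
    have := abs_lt.1 (mem_filter.1 hx).2
    constructor <;> linarith
  have hsub : typical ⊆ boundedTuples B m L := fun x hx => by
    simp only [boundedTuples, mem_filter, mem_univ, true_and]
    exact_mod_cast ((hbounds hx).2.trans_le hL).le
  have hweight {x} (hx : x ∈ typical) :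
      ∏ i, tilt B t (x i) ≤ exp (t * m * (μ - ε)) / expSum B t ^ m := by
    rw [prod_tilt, mul_assoc]
    refine div_le_div_of_nonneg_right (exp_le_exp.2 ?_) (pow_pos (expSum_pos B t) m).le
    exact mul_le_mul_of_nonpos_left (hbounds hx).1.le ht
  have key : 1 / 2 < #(boundedTuples B m L) * (exp (t * m * (μ - ε)) / expSum B t ^ m) :=
    calc 1 / 2 < ∑ x ∈ typical, ∏ i, tilt B t (x i) := one_half_lt_sum_prod_tilt B t hε hm
      _ ≤ #typical * (exp (t * m * (μ - ε)) / expSum B t ^ m) :=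
          (sum_le_card_nsmul _ _ _ fun x hx => hweight hx).trans_eq (nsmul_eq_mul _ _)
      _ ≤ #(boundedTuples B m L) * (exp (t * m * (μ - ε)) / expSum B t ^ m) :=
          mul_le_mul_of_nonneg_right (by exact_mod_cast card_le_card hsub)
            (div_nonneg (exp_pos _).le (pow_pos (expSum_pos B t) m).le)
  rw [exp_neg, ← div_eq_mul_inv, div_lt_iff₀ (exp_pos _)]
  rw [mul_div_assoc', lt_div_iff₀ (pow_pos (expSum_pos B t) m)] at key
  linarith

end LowerBound

section Asymptotics

variable (B : ℕ)

theorem eventually_lt_log_card_div {t : ℝ} (ht : t ≤ 0) {ε r b : ℝ} (hε : 0 < ε)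
    (hr : tiltMean B t + ε < r) (hb : b < log (expSum B t) - t * (tiltMean B t - ε)) :
    ∀ᶠ m : ℕ in atTop, b < log #(boundedTuples B m ⌊r * m⌋₊) / m := by
  set c := log (expSum B t) - t * (tiltMean B t - ε)
  have hlim : Tendsto (fun m : ℕ => c - log 2 / m) atTop (𝓝 c) := by
    simpa using tendsto_const_nhds.sub (tendsto_const_div_atTop_nhds_zero_nat (log 2))
  have hcast := tendsto_natCast_atTop_atTop (R := ℝ)
  filter_upwards [hlim.eventually (lt_mem_nhds hb),
    hcast.eventually_ge_atTop (1 / (r - tiltMean B t - ε)),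
    hcast.eventually_gt_atTop (2 * B ^ 2 / ε ^ 2)] with m hbm hmr hmB
  have hm : 2 * B ^ 2 < ε ^ 2 * m := by rwa [div_lt_iff₀' (by positivity)] at hmB
  have hm0 : (0 : ℝ) < m := (div_pos one_pos (by linarith)).trans_le hmr
  have hL : m * (tiltMean B t + ε) ≤ ⌊r * m⌋₊ := by
    rw [div_le_iff₀ (by linarith)] at hmr
    linarith [Nat.sub_one_lt_floor (r * m)]
  have hN : (0 : ℝ) < #(boundedTuples B m ⌊r * m⌋₊) :=
    Nat.cast_pos.2 (card_boundedTuples_pos B m ⌊r * m⌋₊)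
  have key := log_lt_log (mul_pos (pow_pos (expSum_pos B t) m) (exp_pos _))
    (expSum_pow_mul_exp_lt_two_mul_card B ht hε hL hm)
  rw [log_mul (pow_pos (expSum_pos B t) m).ne' (exp_pos _).ne', log_pow, log_exp,
    log_mul (by norm_num) hN.ne'] at key
  rw [lt_div_iff₀ hm0]
  rw [lt_sub_comm, div_lt_iff₀ hm0] at hbm
  linarith

theorem exists_tilt_lt {r a b : ℝ} (hr0 : 0 < r) (hr : r ≤ B / 2)
    (ha : ∀ t, a ≤ log (expSum B t) - t * r) (hb : b < a) :
    ∃ t ≤ 0, ∃ ε > 0, tiltMean B t + ε < r ∧ b < log (expSum B t) - t * (tiltMean B t - ε) := by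
  have hB : (0 : ℝ) < B := by linarith
  set T := log (r / 2 / B ^ 2)
  set ε := min (r / 4) ((a - b) / (3 * (|T| + 1)))
  have hε : 0 < ε := lt_min (by positivity) (div_pos (by linarith) (by positivity))
  have hεr : ε ≤ r / 4 := min_le_left _ _
  have hεab : 3 * (|T| + 1) * ε ≤ a - b := by
    rw [← le_div_iff₀' (by positivity)]
    exact min_le_right _ _
  -- the tilt with mean `r - 2ε` is at least `-|T|` whatever `ε`, so the loss `3 t ε` is small
  obtain ⟨t, ⟨htT, ht0⟩, hμ⟩ := exists_tiltMean_eq B (s := r - 2 * ε) (by linarith) (by linarith)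
  have hTt : -|T| ≤ t :=
    (neg_abs_le T).trans ((log_le_log (by positivity) (by gcongr; linarith)).trans htT)
  refine ⟨t, ht0, ε, hε, by linarith, ?_⟩
  rw [hμ]
  nlinarith [ha t]

end Asymptotics

section Rate

variable (B : ℕ) {r : ℝ}

theorem mul_le_log_expSum (hr0 : 0 ≤ r) (hr : r ≤ B / 2) (t : ℝ) : t * r ≤ log (expSum B t) := by
  rcases le_total t 0 with ht | ht
  · exact (mul_nonpos_of_nonpos_of_nonneg ht hr0).trans (log_nonneg (one_le_expSum B t))
  · have := log_add_one_add_le_log_expSum B t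
    have := log_nonneg (by linarith [(Nat.cast_nonneg B : (0 : ℝ) ≤ B)] : (1 : ℝ) ≤ B + 1)
    nlinarith

theorem isGLB_log_expSum_sub_mul (hr0 : 0 ≤ r) (hr : r ≤ B / 2) :
    IsGLB (Set.range fun t => log (expSum B t) - t * r)
      (log (B + 1) - ⨆ t, (t * r - log (expSum B t / (B + 1)))) := by
  have hB : (0 : ℝ) < B + 1 := by positivity
  have hlog (t : ℝ) : t * r - log (expSum B t / (B + 1)) =
      log (B + 1) - (log (expSum B t) - t * r) := by
    rw [log_div (expSum_pos B t).ne' hB.ne']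
    ring
  have hbdd : BddAbove (Set.range fun t => t * r - log (expSum B t / (B + 1))) :=
    ⟨log (B + 1), by
      rintro _ ⟨t, rfl⟩
      linarith [hlog t, mul_le_log_expSum B hr0 hr t]⟩
  constructor
  · rintro _ ⟨t, rfl⟩
    linarith [hlog t, le_ciSup hbdd t]
  · intro b hb
    have : ⨆ t, (t * r - log (expSum B t / (B + 1))) ≤ log (B + 1) - b :=
      ciSup_le fun t => by linarith [hlog t, hb ⟨t, rfl⟩]
    linarith

end Rate

theorem stmt_11_general (B : ℕ) (r : ℝ) (hr0 : 0 ≤ r) (hr : r < (B : ℝ) / 2) :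
    Tendsto (fun m : ℕ =>
        Real.log (Nat.card {x : Fin m → ℕ //
          (∑ i, x i ≤ ⌊r * m⌋₊) ∧ ∀ i, x i ≤ B}) / m)
      atTop (nhds (Real.log (B + 1) -
        ⨆ t : ℝ, (t * r -
          Real.log ((∑ j ∈ Finset.range (B + 1), Real.exp (j * t)) / (B + 1))))) := by
  have hglb := isGLB_log_expSum_sub_mul B hr0 hr.le
  simp only [natCard_eq_card_boundedTuples]
  refine tendsto_order.2 ⟨fun b hb => ?_, fun c hc => ?_⟩
  · rcases hr0.eq_or_lt with rfl | hr0
    · have hlim : Tendsto (fun t => log (expSum B t)) atBot (𝓝 0) := by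
        simpa using (tendsto_expSum_atBot B).log one_ne_zero
      have ha := ge_of_tendsto' hlim fun t => (hglb.1 ⟨t, rfl⟩).trans_eq (by simp)
      exact .of_forall fun m =>
        hb.trans_le (ha.trans (div_nonneg (log_natCast_nonneg _) (Nat.cast_nonneg _)))
    · obtain ⟨t, ht, ε, hε, hμ, hb⟩ := exists_tilt_lt B hr0 hr.le (fun t => hglb.1 ⟨t, rfl⟩) hb
      exact eventually_lt_log_card_div B ht hε hμ hb
  · obtain ⟨_, ⟨t, rfl⟩, -, htc⟩ := hglb.exists_between hc
    filter_upwards [eventually_gt_atTop 0] with m hm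
    exact (log_card_boundedTuples_div_le B hr.le hm (Nat.floor_le (by positivity)) t).trans_lt htc

theorem stmt_11 (B : ℕ) (hB : 0 < B) (r : ℝ) (hr0 : 0 ≤ r) (hr : r < (B : ℝ) / 2) :
    Tendsto (fun m : ℕ =>
        Real.log (Nat.card {x : Fin m → ℕ //
          (∑ i, x i ≤ ⌊r * m⌋₊) ∧ ∀ i, x i ≤ B}) / m)
      atTop (nhds (Real.log (B + 1) -
        ⨆ t : ℝ, (t * r -
          Real.log ((∑ j ∈ Finset.range (B + 1), Real.exp (j * t)) / (B + 1))))) :=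
  stmt_11_general B r hr0 hr
end

section
/- Let B, m, L be positive integers with g(x) = Σ_{k=0}^{m-1} x_{k+1} · (2B+1)^k and U = g(W(m, L, B)). Then the sumset U + U has cardinality |W(m, 2L, 2B)|. -/
open scoped Pointwise

/-- IVT for sums over a finset: any value between the sum of lower bounds and
sum of upper bounds is achieved. -/
lemma aux_ivt {ι : Type*} [DecidableEq ι] (s : Finset ι) (lo hi : ι → ℕ) :
    ∀ n, (∀ i ∈ s, lo i ≤ hi i) → (∑ i ∈ s, lo i) ≤ n → n ≤ ∑ i ∈ s, hi i →
      ∃ x : ι → ℕ, (∀ i ∈ s, lo i ≤ x i ∧ x i ≤ hi i) ∧ ∑ i ∈ s, x i = n := by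
  induction s using Finset.cons_induction with
  | empty =>
    intro n _ h2 h3
    refine ⟨lo, by simp, ?_⟩
    simp only [Finset.sum_empty] at h2 h3 ⊢
    omega
  | cons a s ha ih =>
    intro n hle h2 h3
    rw [Finset.sum_cons] at h2 h3
    have hlos : ∀ i ∈ s, lo i ≤ hi i := fun i hi => hle i (Finset.mem_cons_of_mem hi)
    have hla : lo a ≤ hi a := hle a (Finset.mem_cons_self a s)
    have hlh : (∑ i ∈ s, lo i) ≤ ∑ i ∈ s, hi i := Finset.sum_le_sum hlos
    set c := min (hi a) (n - ∑ i ∈ s, lo i) with hc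
    have hc1 : lo a ≤ c := le_min hla (by omega)
    have hc2 : c ≤ hi a := min_le_left _ _
    have hc3 : c ≤ n := le_trans (min_le_right _ _) (by omega)
    obtain ⟨x, hx1, hx2⟩ := ih (n - c) hlos (by omega) (by omega)
    refine ⟨Function.update x a c, ?_, ?_⟩
    · intro i hmem
      rcases Finset.mem_cons.mp hmem with rfl | hi'
      · simp [hc1, hc2]
      · have hne : i ≠ a := by rintro rfl; exact ha hi'
        simpa [Function.update_of_ne hne] using hx1 i hi'
    · have hsum : (∑ i ∈ s, Function.update x a c i) = ∑ i ∈ s, x i := by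
        apply Finset.sum_congr rfl
        intro i hi
        exact Function.update_of_ne (by rintro rfl; exact ha hi) _ _
      rw [Finset.sum_cons, Function.update_self, hsum, hx2]
      omega

/-- Injectivity of base-c digit encoding. -/
lemma aux_inj (c : ℕ) : ∀ (m : ℕ) (x y : Fin m → ℕ), (∀ i, x i < c) → (∀ i, y i < c) →
    (∑ k : Fin m, x k * c ^ (k : ℕ)) = (∑ k : Fin m, y k * c ^ (k : ℕ)) → x = y := by
  intro m
  induction m with
  | zero => intro x y _ _ _; funext i; exact absurd i.isLt (by omega)
  | succ n ih =>
    intro x y hx hy h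
    rw [Fin.sum_univ_succ, Fin.sum_univ_succ] at h
    simp only [Fin.val_succ, pow_succ, Fin.val_zero, pow_zero, mul_one] at h
    have e : ∀ w : Fin (n + 1) → ℕ, (∑ k : Fin n, w k.succ * (c ^ (k : ℕ) * c))
        = (∑ k : Fin n, w k.succ * c ^ (k : ℕ)) * c := by
      intro w
      rw [Finset.sum_mul]
      exact Finset.sum_congr rfl (fun k _ => (mul_assoc _ _ _).symm)
    rw [e x, e y] at h
    have h' : x 0 + (∑ k : Fin n, x k.succ * c ^ (k : ℕ)) * c
        = y 0 + (∑ k : Fin n, y k.succ * c ^ (k : ℕ)) * c := h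
    have hx0 : x 0 < c := hx 0
    have hy0 : y 0 < c := hy 0
    have h0 : x 0 = y 0 := by
      have := congrArg (· % c) h'
      simpa [Nat.add_mul_mod_self_right, Nat.mod_eq_of_lt hx0, Nat.mod_eq_of_lt hy0] using this
    have hrest : (∑ k : Fin n, x k.succ * c ^ (k : ℕ)) = ∑ k : Fin n, y k.succ * c ^ (k : ℕ) := by
      have hcpos : 0 < c := by omega
      have : (∑ k : Fin n, x k.succ * c ^ (k : ℕ)) * c
          = (∑ k : Fin n, y k.succ * c ^ (k : ℕ)) * c := by omega
      exact Nat.eq_of_mul_eq_mul_right hcpos this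
    have := ih (fun k => x k.succ) (fun k => y k.succ) (fun k => hx k.succ) (fun k => hy k.succ) hrest
    funext i
    rcases Fin.eq_zero_or_eq_succ i with rfl | ⟨j, rfl⟩
    · exact h0
    · exact congrFun this j

theorem stmt_13 (B m L : ℕ) (hB : 0 < B) (hm : 0 < m) (hL : 0 < L) :
    Nat.card
        (((fun x : Fin m → ℕ => ∑ k : Fin m, x k * (2 * B + 1) ^ (k : ℕ)) ''
            {x : Fin m → ℕ | (∑ i, x i ≤ L) ∧ ∀ i, x i ≤ B}) +
          ((fun x : Fin m → ℕ => ∑ k : Fin m, x k * (2 * B + 1) ^ (k : ℕ)) ''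
            {x : Fin m → ℕ | (∑ i, x i ≤ L) ∧ ∀ i, x i ≤ B})) =
      Nat.card {x : Fin m → ℕ // (∑ i, x i ≤ 2 * L) ∧ ∀ i, x i ≤ 2 * B} := by
  set g : (Fin m → ℕ) → ℕ := fun x => ∑ k : Fin m, x k * (2 * B + 1) ^ (k : ℕ) with hg
  set W : Set (Fin m → ℕ) := {x | (∑ i, x i ≤ L) ∧ ∀ i, x i ≤ B} with hW
  set W2 : Set (Fin m → ℕ) := {x | (∑ i, x i ≤ 2 * L) ∧ ∀ i, x i ≤ 2 * B} with hW2
  have gadd : ∀ x y : Fin m → ℕ, g (x + y) = g x + g y := by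
    intro x y
    simp only [hg, Pi.add_apply, add_mul, Finset.sum_add_distrib]
  -- sumset equals image of W2
  have hset : g '' W + g '' W = g '' W2 := by
    apply Set.Subset.antisymm
    · rintro z hz
      rw [Set.mem_add] at hz
      obtain ⟨a, ⟨x, hxW, rfl⟩, b, ⟨y, hyW, rfl⟩, rfl⟩ := hz
      refine ⟨x + y, ⟨?_, ?_⟩, gadd x y⟩
      · have h1 := hxW.1
        have h2 := hyW.1
        simp only [Pi.add_apply, Finset.sum_add_distrib]
        omega
      · intro i; have := hxW.2 i; have := hyW.2 i; simp only [Pi.add_apply]; omega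
    · rintro _ ⟨z, ⟨hzs, hzb⟩, rfl⟩
      -- split z = x + y
      have hle : ∀ i ∈ Finset.univ, (fun i => z i - B) i ≤ (fun i => min (z i) B) i := by
        intro i _
        have := hzb i; simp only; omega
      have h2 : (∑ i : Fin m, (z i - B)) ≤ (∑ i : Fin m, z i) / 2 := by
        have : 2 * ∑ i : Fin m, (z i - B) ≤ ∑ i : Fin m, z i := by
          rw [Finset.mul_sum]
          apply Finset.sum_le_sum
          intro i _; have := hzb i; omega
        omega
      have h3 : (∑ i : Fin m, z i) / 2 ≤ ∑ i : Fin m, min (z i) B := by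
        have : (∑ i : Fin m, z i) ≤ 2 * ∑ i : Fin m, min (z i) B := by
          rw [Finset.mul_sum]
          apply Finset.sum_le_sum
          intro i _; have := hzb i; omega
        omega
      obtain ⟨x, hx1, hx2⟩ := aux_ivt Finset.univ (fun i => z i - B) (fun i => min (z i) B)
        ((∑ i : Fin m, z i) / 2) hle h2 h3
      set y : Fin m → ℕ := fun i => z i - x i with hy
      have hxy : ∀ i, x i + y i = z i := by
        intro i
        have := (hx1 i (Finset.mem_univ i)).2
        simp only [hy]; omega
      have hsy : (∑ i : Fin m, y i) = (∑ i : Fin m, z i) - (∑ i : Fin m, z i) / 2 := by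
        have : (∑ i : Fin m, x i) + (∑ i : Fin m, y i) = ∑ i : Fin m, z i := by
          rw [← Finset.sum_add_distrib]
          exact Finset.sum_congr rfl (fun i _ => hxy i)
        omega
      refine Set.mem_add.mpr ⟨g x, ⟨x, ⟨?_, ?_⟩, rfl⟩, g y, ⟨y, ⟨?_, ?_⟩, rfl⟩, ?_⟩
      · rw [hx2]; omega
      · intro i; exact le_trans (hx1 i (Finset.mem_univ i)).2 (min_le_right _ _)
      · rw [hsy]; omega
      · intro i
        have := (hx1 i (Finset.mem_univ i)).1
        have := hzb i
        simp only [hy]; omega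
      · rw [← gadd]
        congr 1
        funext i
        exact hxy i
  rw [hset]
  have hinj : Set.InjOn g W2 := by
    intro x hx y hy hxy
    exact aux_inj (2 * B + 1) m x y (fun i => by have := hx.2 i; omega)
      (fun i => by have := hy.2 i; omega) hxy
  have := Set.ncard_image_of_injOn hinj
  rw [Nat.card_coe_set_eq, this, ← Nat.card_coe_set_eq]
  rfl
end

section
/- For positive integers m, L, B, the sumset W(m, L, B) + W(m, L, B) (coordinatewise addition) equals W(m, 2L, 2B). -/
open scoped Pointwise

lemma ivt_aux (f : ℕ → ℕ) (hf : ∀ k, f (k + 1) ≤ f k + 1) (L a : ℕ)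
    (h0 : f 0 ≤ L) (ha : a ≤ L) :
    ∀ n, a ≤ f n → ∃ k, a ≤ f k ∧ f k ≤ L := by
  intro n
  induction n with
  | zero => exact fun h => ⟨0, h, h0⟩
  | succ n ih =>
    intro h
    by_cases hc : f (n + 1) ≤ L
    · exact ⟨n + 1, h, hc⟩
    · exact ih (by have := hf n; omega)

theorem stmt_14 (B m L : ℕ) (hB : 0 < B) (hm : 0 < m) (hL : 0 < L) :
    ({x : Fin m → ℕ | (∑ i, x i ≤ L) ∧ ∀ i, x i ≤ B} +
        {x : Fin m → ℕ | (∑ i, x i ≤ L) ∧ ∀ i, x i ≤ B}) =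
      {x : Fin m → ℕ | (∑ i, x i ≤ 2 * L) ∧ ∀ i, x i ≤ 2 * B} := by
  ext x
  simp only [Set.mem_add, Set.mem_setOf_eq]
  constructor
  · rintro ⟨a, ⟨haL, haB⟩, b, ⟨hbL, hbB⟩, rfl⟩
    constructor
    · simp only [Pi.add_apply, Finset.sum_add_distrib]
      omega
    · intro i
      simp only [Pi.add_apply]
      have := haB i; have := hbB i; omega
  · rintro ⟨hL2, hB2⟩
    set f : ℕ → ℕ := fun k => ∑ i : Fin m, if (i : ℕ) < k then (x i + 1) / 2 else x i / 2
      with hf_def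
    have hsum0 : 2 * f 0 ≤ ∑ i, x i := by
      rw [hf_def]
      simp only [Nat.not_lt_zero, if_false]
      rw [Finset.mul_sum]
      exact Finset.sum_le_sum fun i _ => by omega
    have h0L : f 0 ≤ L := by omega
    have hfm : f 0 + f m = ∑ i, x i := by
      rw [hf_def]
      simp only [Fin.is_lt, if_true, Nat.not_lt_zero, if_false]
      rw [← Finset.sum_add_distrib]
      exact Finset.sum_congr rfl fun i _ => by omega
    have hstep : ∀ k, f (k + 1) ≤ f k + 1 := by
      intro k
      simp only [hf_def]
      calc (∑ i : Fin m, if (i : ℕ) < k + 1 then (x i + 1) / 2 else x i / 2)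
          ≤ ∑ i : Fin m, ((if (i : ℕ) < k then (x i + 1) / 2 else x i / 2) +
              (if (i : ℕ) = k then 1 else 0)) := by
            refine Finset.sum_le_sum fun i _ => ?_
            by_cases h1 : (i : ℕ) < k
            · simp [h1, Nat.lt_succ_of_lt h1]
            · by_cases h2 : (i : ℕ) = k
              · simp [h1, h2]; omega
              · have : ¬ (i : ℕ) < k + 1 := by omega
                simp [h1, h2, this]
        _ ≤ (∑ i : Fin m, if (i : ℕ) < k then (x i + 1) / 2 else x i / 2) + 1 := by
            rw [Finset.sum_add_distrib]
            have : (∑ i : Fin m, if (i : ℕ) = k then 1 else 0) ≤ 1 := by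
              by_cases hk : k < m
              · rw [Finset.sum_eq_single (⟨k, hk⟩ : Fin m)]
                · simp
                · intro b _ hb
                  simp only [ite_eq_right_iff]
                  intro hbk
                  exact absurd (Fin.ext hbk) hb
                · simp
              · have : ∀ i : Fin m, ((if (i : ℕ) = k then 1 else 0) : ℕ) = 0 := by
                  intro i
                  have := i.is_lt
                  simp only [ite_eq_right_iff]
                  omega
                simp [this]
            omega
    obtain ⟨k, hk1, hk2⟩ := ivt_aux f hstep L (∑ i, x i - L) h0L (by omega) m (by omega)
    set y : Fin m → ℕ := fun i => if (i : ℕ) < k then (x i + 1) / 2 else x i / 2 with hy_def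
    have hyx : ∀ i, y i ≤ x i := by
      intro i; rw [hy_def]; dsimp only; split <;> omega
    have hyB : ∀ i, y i ≤ B := by
      intro i; have := hB2 i; rw [hy_def]; dsimp only; split <;> omega
    have hzB : ∀ i, x i - y i ≤ B := by
      intro i; have := hB2 i; rw [hy_def]; dsimp only; split <;> omega
    have hsy : ∑ i, y i = f k := rfl
    have hsz : (∑ i, (x i - y i)) + ∑ i, y i = ∑ i, x i := by
      rw [← Finset.sum_add_distrib]
      exact Finset.sum_congr rfl fun i _ => by have := hyx i; omega
    refine ⟨y, ⟨by omega, hyB⟩, fun i => x i - y i, ⟨?_, hzB⟩, ?_⟩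
    · simpa using (by omega : ∑ i, (x i - y i) ≤ L)
    funext i
    simp only [Pi.add_apply]
    have := hyx i
    omega
end

section
/- For positive integers m, L, B, the cardinality of the difference set W(m, L, B) − W(m, L, B) (in ℤ^m) equals Σ_{k=0}^{min(m,L)} binomial(m, k) · |W(k, L − k, B − 1)| · |W(m − k, L, B)|. -/
/-!
In a lattice-ordered group, if `W` lies in the nonnegative cone and contains every `y` with
`0 ≤ y ≤ x` for `x ∈ W`, then `z ∈ W - W` iff `z⁺ ∈ W` and `z⁻ ∈ W`: a representation
`z = u - v` forces `z⁺ ≤ u` and `z⁻ ≤ v`, and `z = z⁺ - z⁻` is one.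

Sort such `z ∈ ℤ^m` by the set `S` of coordinates where `z` is positive, with `|S| = k`.
On `S`, `z` is a point of `W(k, L, B)` with all coordinates `≥ 1`; subtracting `1` everywhere
turns these into the points of `W(k, L - k, B - 1)`. Off `S`, `-z` is an arbitrary point of
`W(m - k, L, B)`. So each of the `binomial(m, k)` sets `S` contributes the same product, and
sets with `k > L` contribute nothing.
-/

open scoped Pointwise
open Finset

theorem sub_self_eq_setOf_posPart_negPart {α : Type*} [AddCommGroup α] [Lattice α]
    [IsOrderedAddMonoid α] {W : Set α} (hW : W ⊆ Set.Ici 0)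
    (hW_Icc : ∀ x ∈ W, Set.Icc 0 x ⊆ W) : W - W = {z | z⁺ ∈ W ∧ z⁻ ∈ W} := by
  ext z
  constructor
  · rintro ⟨u, hu, v, hv, rfl⟩
    have hu0 : 0 ≤ u := hW hu
    have hv0 : 0 ≤ v := hW hv
    exact ⟨hW_Icc u hu ⟨posPart_nonneg _, sup_le (sub_le_self u hv0) hu0⟩,
      hW_Icc v hv ⟨negPart_nonneg _, sup_le (by rw [neg_sub]; exact sub_le_self v hu0) hv0⟩⟩
  · rintro ⟨hp, hn⟩
    exact ⟨z⁺, hp, z⁻, hn, posPart_sub_negPart z⟩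

lemma natCard_eq_sum_natCard_fibre {ι : Type*} [Fintype ι] {s : Set (ι → ℤ)} (hs : s.Finite) :
    Nat.card s = ∑ S : Finset ι, Nat.card {z // z ∈ s ∧ ∀ i, i ∈ S ↔ 0 < z i} := by
  have := hs.to_subtype
  rw [← Nat.card_congr (Equiv.sigmaFiberEquiv fun z : s => univ.filter fun i => 0 < z.1 i),
    Nat.card_sigma]
  refine Fintype.sum_congr _ _ fun S => Nat.card_congr <|
    (Equiv.subtypeSubtypeEquivSubtypeInter (· ∈ s) fun z => univ.filter (0 < z ·) = S).trans
      (Equiv.subtypeEquivRight fun z => ?_)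
  simp [Finset.ext_iff, iff_comm]

section Boxes

variable (ι : Type*) [Fintype ι] (L B : ℕ)

def intBox : Set (ι → ℤ) := {x | (∀ i, 0 ≤ x i) ∧ (∑ i, x i ≤ L) ∧ ∀ i, x i ≤ B}

def posIntBox : Set (ι → ℤ) := {x | (∀ i, 0 < x i) ∧ (∑ i, x i ≤ L) ∧ ∀ i, x i ≤ B}

def natBox : Set (ι → ℕ) := {x | (∑ i, x i ≤ L) ∧ ∀ i, x i ≤ B}

end Boxes

section Counting

variable {ι κ : Type*} [Fintype ι] [Fintype κ] {L B : ℕ}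

lemma intBox_subset_Ici : intBox ι L B ⊆ Set.Ici 0 := fun _ hx i => hx.1 i

lemma Icc_subset_intBox {x : ι → ℤ} (hx : x ∈ intBox ι L B) : Set.Icc 0 x ⊆ intBox ι L B :=
  fun _ ⟨hy0, hyx⟩ => ⟨hy0, (sum_le_sum fun i _ => hyx i).trans hx.2.1,
    fun i => (hyx i).trans (hx.2.2 i)⟩

lemma intBox_finite : (intBox ι L B).Finite :=
  (Set.Finite.pi fun _ => Set.finite_Icc (0 : ℤ) B).subset fun _ hx i _ => ⟨hx.1 i, hx.2.2 i⟩

def intBoxEquivNatBox : intBox ι L B ≃ natBox ι L B where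
  toFun x := ⟨fun i => (x.1 i).toNat, by
    have hcast : ∀ i, ((x.1 i).toNat : ℤ) = x.1 i := fun i => Int.toNat_of_nonneg (x.2.1 i)
    have hsum : ((∑ i, (x.1 i).toNat : ℕ) : ℤ) ≤ L := by push_cast [hcast]; exact x.2.2.1
    exact_mod_cast hsum, fun i => Int.toNat_le.2 (x.2.2.2 i)⟩
  invFun y := ⟨fun i => y.1 i, fun _ => Nat.cast_nonneg _, by dsimp only; exact_mod_cast y.2.1,
    fun i => by dsimp only; exact_mod_cast y.2.2 i⟩
  left_inv x := Subtype.ext <| funext fun i => Int.toNat_of_nonneg (x.2.1 i)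
  right_inv y := Subtype.ext <| funext fun i => Int.toNat_natCast (y.1 i)

lemma natCard_natBox_congr (e : ι ≃ κ) : Nat.card (natBox ι L B) = Nat.card (natBox κ L B) :=
  Nat.card_congr <| (e.arrowCongr (Equiv.refl ℕ)).subtypeEquiv fun x => by
    simp only [natBox, Set.mem_ofPred_eq, Equiv.arrowCongr_apply, Equiv.coe_refl,
      Function.comp_apply, id_eq, e.symm.sum_comp x]
    exact and_congr_right' e.symm.surjective.forall

lemma natCard_intBox : Nat.card (intBox ι L B) = Nat.card (natBox (Fin (Fintype.card ι)) L B) :=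
  (Nat.card_congr intBoxEquivNatBox).trans (natCard_natBox_congr (Fintype.equivFin ι))

-- `L - card ι` truncates to `0` when `card ι > L`, but then there is no point at all.
lemma natCard_posIntBox (hB : 0 < B) : Nat.card (posIntBox ι L B) =
    if Fintype.card ι ≤ L then Nat.card (intBox ι (L - Fintype.card ι) (B - 1)) else 0 := by
  split_ifs with hι
  · refine Nat.card_congr ((Equiv.subRight 1).subtypeEquiv fun a => ?_)
    simp only [posIntBox, intBox, Set.mem_ofPred_eq, Equiv.subRight_apply, Pi.sub_apply,
      Pi.one_apply, sum_sub_distrib, sum_const, card_univ, nsmul_eq_mul, mul_one]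
    push_cast [Nat.cast_sub hι, Nat.cast_sub (Nat.one_le_iff_ne_zero.2 hB.ne')]
    refine and_congr (forall_congr' fun i => ?_) (and_congr ?_ (forall_congr' fun i => ?_)) <;>
      omega
  · refine Nat.card_eq_zero.2 (Or.inl ⟨fun ⟨a, hpos, hsum, _⟩ => hι ?_⟩)
    have := card_nsmul_le_sum univ a 1 fun i _ => hpos i
    simp only [card_univ, nsmul_eq_mul, mul_one] at this
    exact_mod_cast this.trans hsum

variable [DecidableEq ι] {S : Finset ι} {z : ι → ℤ}

lemma sum_posPart_eq_sum_subtype (hS : ∀ i, i ∈ S ↔ 0 < z i) :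
    ∑ i, (z i)⁺ = ∑ i : {i // i ∈ S}, z i := by
  rw [← sum_subtype S (fun _ => Iff.rfl) z, ← Fintype.sum_ite_mem S z]
  refine Fintype.sum_congr _ _ fun i => ?_
  split_ifs with hi
  · exact posPart_eq_self.2 ((hS i).1 hi).le
  · exact posPart_eq_zero.2 (not_lt.1 ((hS i).not.1 hi))

lemma sum_negPart_eq_sum_subtype (hS : ∀ i, i ∈ S ↔ 0 < z i) :
    ∑ i, (z i)⁻ = ∑ i : {i // i ∉ S}, -z i := by
  rw [← sum_subtype Sᶜ (fun _ => mem_compl) (fun i => -z i),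
    ← Fintype.sum_ite_mem Sᶜ (fun i => -z i)]
  refine Fintype.sum_congr _ _ fun i => ?_
  split_ifs with hi
  · exact negPart_eq_neg.2 (not_lt.1 ((hS i).not.1 (mem_compl.1 hi)))
  · exact negPart_eq_zero.2 ((hS i).1 (not_not.1 (mem_compl.not.1 hi))).le

variable (L B) in
lemma mem_intBox_posPart_negPart_and_signs_iff :
    ((z⁺ ∈ intBox ι L B ∧ z⁻ ∈ intBox ι L B) ∧ ∀ i, i ∈ S ↔ 0 < z i) ↔
      (fun i : {i // i ∈ S} => z i) ∈ posIntBox _ L B ∧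
        (fun i : {i // i ∉ S} => -z i) ∈ intBox _ L B := by
  constructor
  · rintro ⟨⟨⟨-, hp_sum, hp_le⟩, ⟨-, hn_sum, hn_le⟩⟩, hS⟩
    simp only [Pi.posPart_apply, sum_posPart_eq_sum_subtype hS] at hp_sum hp_le
    simp only [Pi.negPart_apply, sum_negPart_eq_sum_subtype hS] at hn_sum hn_le
    refine ⟨⟨fun i => (hS i).1 i.2, hp_sum, fun i => (le_posPart _).trans (hp_le i)⟩,
      ⟨fun i => neg_nonneg.2 (not_lt.1 ((hS i).not.1 i.2)), hn_sum,
        fun i => (neg_le_negPart _).trans (hn_le i)⟩⟩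
  · rintro ⟨⟨hpos, hp_sum, hp_le⟩, ⟨hneg, hn_sum, hn_le⟩⟩
    have hS : ∀ i, i ∈ S ↔ 0 < z i := fun i => by
      by_cases hi : i ∈ S
      · exact iff_of_true hi (hpos ⟨i, hi⟩)
      · exact iff_of_false hi (not_lt.2 (neg_nonneg.1 (hneg ⟨i, hi⟩)))
    have hbound : ∀ i, z i ≤ B ∧ -z i ≤ B := fun i => by
      by_cases hi : i ∈ S
      · have h₁ : 0 < z i := hpos ⟨i, hi⟩
        have h₂ : z i ≤ B := hp_le ⟨i, hi⟩
        omega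
      · have h₁ : 0 ≤ -z i := hneg ⟨i, hi⟩
        have h₂ : -z i ≤ B := hn_le ⟨i, hi⟩
        omega
    refine ⟨⟨⟨fun i => posPart_nonneg _, ?_, fun i => sup_le (hbound i).1 B.cast_nonneg⟩,
      ⟨fun i => negPart_nonneg _, ?_, fun i => sup_le (hbound i).2 B.cast_nonneg⟩⟩, hS⟩
    · simpa only [Pi.posPart_apply, sum_posPart_eq_sum_subtype hS] using hp_sum
    · simpa only [Pi.negPart_apply, sum_negPart_eq_sum_subtype hS] using hn_sum

lemma natCard_fibre (hB : 0 < B) (S : Finset ι) :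
    Nat.card {z : ι → ℤ // (z⁺ ∈ intBox ι L B ∧ z⁻ ∈ intBox ι L B) ∧ ∀ i, i ∈ S ↔ 0 < z i} =
      if #S ≤ L then Nat.card (natBox (Fin #S) (L - #S) (B - 1)) *
        Nat.card (natBox (Fin (Fintype.card ι - #S)) L B) else 0 := by
  rw [Nat.card_congr <|
      ((Equiv.piEquivPiSubtypeProd (· ∈ S) fun _ => ℤ).subtypeEquiv fun z =>
        mem_intBox_posPart_negPart_and_signs_iff L B).trans <|
      Equiv.subtypeProdEquivProd.trans <|
      (Equiv.refl _).prodCongr ((Equiv.neg _).subtypeEquiv fun _ => Iff.rfl),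
    Nat.card_prod, natCard_posIntBox hB, Fintype.card_coe]
  split_ifs
  · rw [natCard_intBox, natCard_intBox, Fintype.card_coe, Fintype.card_subtype_compl,
      Fintype.card_coe]
  · rw [zero_mul]

theorem natCard_intBox_sub_intBox (hB : 0 < B) :
    Nat.card ↥(intBox ι L B - intBox ι L B) =
      ∑ k ∈ range (min (Fintype.card ι) L + 1), (Fintype.card ι).choose k *
        Nat.card (natBox (Fin k) (L - k) (B - 1)) *
        Nat.card (natBox (Fin (Fintype.card ι - k)) L B) := by
  have hfin : (intBox ι L B - intBox ι L B).Finite := intBox_finite.sub intBox_finite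
  rw [sub_self_eq_setOf_posPart_negPart intBox_subset_Ici fun _ => Icc_subset_intBox] at hfin ⊢
  rw [natCard_eq_sum_natCard_fibre hfin]
  simp only [Set.mem_ofPred_eq, natCard_fibre hB]
  rw [← powerset_univ, sum_powerset_apply_card (fun k => if k ≤ L then
    Nat.card (natBox (Fin k) (L - k) (B - 1)) * Nat.card (natBox (Fin (Fintype.card ι - k)) L B)
    else 0), card_univ]
  have hrange :
      range (min (Fintype.card ι) L + 1) = (range (Fintype.card ι + 1)).filter (· ≤ L) := by
    ext k; simp only [mem_range, mem_filter]; omega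
  rw [hrange, sum_filter]
  refine sum_congr rfl fun k _ => ?_
  split_ifs <;> simp only [smul_eq_mul, mul_zero, mul_assoc]

end Counting

theorem stmt_15_general (B m L : ℕ) (hB : 0 < B) :
    Nat.card
        (({x : Fin m → ℤ | (∀ i, 0 ≤ x i) ∧ (∑ i, x i ≤ L) ∧ ∀ i, x i ≤ B} -
          {x : Fin m → ℤ | (∀ i, 0 ≤ x i) ∧ (∑ i, x i ≤ L) ∧ ∀ i, x i ≤ B})) =
      ∑ k ∈ Finset.range (min m L + 1),
        m.choose k *
          Nat.card {x : Fin k → ℕ // (∑ i, x i ≤ L - k) ∧ ∀ i, x i ≤ B - 1} *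
          Nat.card {x : Fin (m - k) → ℕ // (∑ i, x i ≤ L) ∧ ∀ i, x i ≤ B} := by
  have h := natCard_intBox_sub_intBox (ι := Fin m) (L := L) hB
  rwa [Fintype.card_fin] at h

theorem stmt_15 (B m L : ℕ) (hB : 0 < B) (hm : 0 < m) (hL : 0 < L) :
    Nat.card
        (({x : Fin m → ℤ | (∀ i, 0 ≤ x i) ∧ (∑ i, x i ≤ L) ∧ ∀ i, x i ≤ B} -
          {x : Fin m → ℤ | (∀ i, 0 ≤ x i) ∧ (∑ i, x i ≤ L) ∧ ∀ i, x i ≤ B})) =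
      ∑ k ∈ Finset.range (min m L + 1),
        m.choose k *
          Nat.card {x : Fin k → ℕ // (∑ i, x i ≤ L - k) ∧ ∀ i, x i ≤ B - 1} *
          Nat.card {x : Fin (m - k) → ℕ // (∑ i, x i ≤ L) ∧ ∀ i, x i ≤ B} :=
  stmt_15_general B m L hB
end
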